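/- arXiv:2506.06777 — 2 statements merged into one kernel-verified Lean document; each statement's English description precedes it below -/
import Mathlib

section
/- For every β ∈ (0,1) there exists a constant C_d > 0 such that for every integer N ≥ 1, every x ∈ [−1/2,1/2]^d, and every choice of points x₁, …, x_N ∈ [−1/2,1/2]^d, the mollified empirical density ρ^N(x) := (1/N) ∑_{i=1}^N V^N(x − x_i) satisfies the two-sided bound N^β · (Γ(d/2)/(2π^{d/2})) · exp(−d · N^{2β/d}) ≤ ρ^N(x) ≤ C_d · N^β. -/
open MeasureTheory Real
open scoped NNReal BigOperators

noncomputable section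

/-- The mollifier `V₀` from the paper (assumption (Aᵛ)). -/
def V0 (d : ℕ) (y : EuclideanSpace ℝ (Fin d)) : ℝ :=
  if ‖y‖ ≤ 1/2 then Real.Gamma ((d:ℝ)/2) / (2 * Real.pi ^ ((d:ℝ)/2)) * Real.exp (-‖y‖^2)
  else Real.Gamma ((d:ℝ)/2) / (2 * Real.pi ^ ((d:ℝ)/2)) * Real.exp (1/4) * Real.exp (-‖y‖)

/-- The scaled mollifier `V₀^N(y) = N^β V₀(N^{β/d} y)`. -/
def V0N (d : ℕ) (β : ℝ) (N : ℕ) (y : EuclideanSpace ℝ (Fin d)) : ℝ :=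
  (N:ℝ)^β * V0 d ((N:ℝ)^(β/(d:ℝ)) • y)

/-- An integer vector `k ∈ ℤ^d` viewed as an element of `ℝ^d`. -/
def intVec (d : ℕ) (k : Fin d → ℤ) : EuclideanSpace ℝ (Fin d) := WithLp.toLp 2 (fun i => (k i : ℝ))

/-- The periodized mollifier `V^N(x) = ∑_{k ∈ ℤ^d} V₀^N(x - k)`. -/
def VN (d : ℕ) (β : ℝ) (N : ℕ) (x : EuclideanSpace ℝ (Fin d)) : ℝ :=
  ∑' k : Fin d → ℤ, V0N d β N (x - intVec d k)

/-- The fundamental domain `[0,1)^d` of the torus. -/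
def box01 (d : ℕ) : Set (EuclideanSpace ℝ (Fin d)) := {x | ∀ i, x i ∈ Set.Ico (0:ℝ) 1}

/-- The fundamental domain `[-1/2,1/2]^d` of the torus. -/
def boxC (d : ℕ) : Set (EuclideanSpace ℝ (Fin d)) := {x | ∀ i, x i ∈ Set.Icc (-(1/2):ℝ) (1/2)}

/-! ### Auxiliary lemmas -/

lemma aux_prodSummable (f : ℤ → ℝ) (hf : Summable f) (hnn : ∀ m, 0 ≤ f m) (n : ℕ) :
    Summable (fun k : Fin n → ℤ => ∏ i, f (k i)) := by
  induction n with
  | zero => exact .of_finite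
  | succ n ih =>
    rw [← (Fin.consEquiv (fun _ : Fin (n+1) => ℤ)).summable_iff]
    have key : Summable (fun q : ℤ × (Fin n → ℤ) => f q.1 * ∏ i, f (q.2 i)) :=
      Summable.mul_of_nonneg (f := f) (g := fun k : Fin n → ℤ => ∏ i, f (k i))
        hf ih (fun m => hnn m) (fun k => Finset.prod_nonneg fun i _ => hnn _)
    refine key.congr fun q => ?_
    simp only [Function.comp_apply, Fin.consEquiv_apply, Fin.prod_univ_succ,
      Fin.cons_zero, Fin.cons_succ]

lemma aux_coord_le (d : ℕ) (v : EuclideanSpace ℝ (Fin d)) (i : Fin d) : |v i| ≤ ‖v‖ := by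
  rw [EuclideanSpace.norm_eq, ← Real.sqrt_sq_eq_abs]
  apply Real.sqrt_le_sqrt
  simpa using Finset.single_le_sum (f := fun j => ‖v j‖^2)
    (fun j _ => sq_nonneg _) (Finset.mem_univ i)

lemma aux_expSummable (c : ℝ) (hc : 0 < c) :
    Summable (fun m : ℤ => Real.exp ((1 - |(m:ℝ)|) / c)) := by
  apply Summable.of_nat_of_neg <;>
  · simp only [Int.cast_natCast, Int.cast_neg, abs_neg, Nat.abs_cast]
    have h : ∀ n : ℕ, Real.exp ((1 - (n:ℝ)) / c) = Real.exp (1/c) * (Real.exp (-(1/c)))^n := by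
      intro n
      rw [← Real.exp_nat_mul, ← Real.exp_add]
      ring_nf
    simp only [h]
    exact (summable_geometric_of_lt_one (le_of_lt (Real.exp_pos _))
      (Real.exp_lt_one_iff.mpr (neg_lt_zero.mpr (by positivity)))).mul_left _

lemma aux_cst_pos (d : ℕ) (hd : 1 ≤ d) :
    0 < Real.Gamma ((d:ℝ)/2) / (2 * Real.pi ^ ((d:ℝ)/2)) := by
  have hdpos : (0:ℝ) < (d:ℝ)/2 := by
    have : (1:ℝ) ≤ (d:ℝ) := by exact_mod_cast hd
    linarith
  have hg := Real.Gamma_pos_of_pos hdpos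
  have hp : (0:ℝ) < Real.pi ^ ((d:ℝ)/2) := Real.rpow_pos_of_pos Real.pi_pos _
  positivity

lemma aux_V0_nonneg (d : ℕ) (hd : 1 ≤ d) (y : EuclideanSpace ℝ (Fin d)) : 0 ≤ V0 d y := by
  have hc := aux_cst_pos d hd
  rw [V0]
  split
  · exact mul_nonneg hc.le (Real.exp_nonneg _)
  · exact mul_nonneg (mul_nonneg hc.le (Real.exp_nonneg _)) (Real.exp_nonneg _)

lemma aux_V0_le (d : ℕ) (hd : 1 ≤ d) (y : EuclideanSpace ℝ (Fin d)) :
    V0 d y ≤ Real.Gamma ((d:ℝ)/2) / (2 * Real.pi ^ ((d:ℝ)/2)) * Real.exp (1/2)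
      * Real.exp (-‖y‖) := by
  have hc := aux_cst_pos d hd
  rw [V0]
  split_ifs with h
  · rw [mul_assoc, ← Real.exp_add]
    apply mul_le_mul_of_nonneg_left _ hc.le
    apply Real.exp_le_exp.mpr
    nlinarith [sq_nonneg ‖y‖, norm_nonneg y]
  · rw [mul_assoc, mul_assoc, ← Real.exp_add, ← Real.exp_add]
    apply mul_le_mul_of_nonneg_left _ hc.le
    apply Real.exp_le_exp.mpr
    linarith

lemma aux_V0_ge (d : ℕ) (hd : 1 ≤ d) (y : EuclideanSpace ℝ (Fin d)) (a : ℝ)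
    (h1 : ‖y‖ ≤ a) (h2 : ‖y‖^2 ≤ a) :
    Real.Gamma ((d:ℝ)/2) / (2 * Real.pi ^ ((d:ℝ)/2)) * Real.exp (-a) ≤ V0 d y := by
  have hc := aux_cst_pos d hd
  rw [V0]
  split_ifs with h
  · exact mul_le_mul_of_nonneg_left (Real.exp_le_exp.mpr (by linarith)) hc.le
  · rw [mul_assoc, ← Real.exp_add]
    apply mul_le_mul_of_nonneg_left _ hc.le
    apply Real.exp_le_exp.mpr
    linarith

theorem stmt6 (d : ℕ) (hd : 1 ≤ d) (β : ℝ) (hβ : β ∈ Set.Ioo (0:ℝ) 1) :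
    ∃ C : ℝ, 0 < C ∧ ∀ N : ℕ, 1 ≤ N →
      ∀ x ∈ boxC d, ∀ p : Fin N → EuclideanSpace ℝ (Fin d), (∀ i, p i ∈ boxC d) →
        (N:ℝ) ^ β * (Real.Gamma ((d:ℝ)/2) / (2 * Real.pi ^ ((d:ℝ)/2)))
            * Real.exp (-(d:ℝ) * (N:ℝ) ^ (2*β/(d:ℝ)))
          ≤ (1/(N:ℝ)) * ∑ i, VN d β N (x - p i) ∧
        (1/(N:ℝ)) * ∑ i, VN d β N (x - p i) ≤ C * (N:ℝ) ^ β := by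
  obtain ⟨hβ0, hβ1⟩ := hβ
  set c : ℝ := Real.Gamma ((d:ℝ)/2) / (2 * Real.pi ^ ((d:ℝ)/2)) with hcdef
  have hc : 0 < c := aux_cst_pos d hd
  have hdR : (1:ℝ) ≤ (d:ℝ) := by exact_mod_cast hd
  have hdpos : (0:ℝ) < (d:ℝ) := by linarith
  -- dominating function
  set fz : ℤ → ℝ := fun m => Real.exp ((1 - |(m:ℝ)|) / (d:ℝ)) with hfzdef
  have hfznn : ∀ m, 0 ≤ fz m := fun m => (Real.exp_pos _).le
  have hfzsum : Summable fz := aux_expSummable _ hdpos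
  set g : (Fin d → ℤ) → ℝ := fun k => ∏ i, fz (k i) with hgdef
  have hgnn : ∀ k, 0 ≤ g k := fun k => Finset.prod_nonneg fun i _ => hfznn _
  have hgsum : Summable g := aux_prodSummable fz hfzsum hfznn d
  set C₀ : ℝ := ∑' k, g k with hC₀def
  have hC₀pos : 0 < C₀ := by
    have h0 : 0 < g (fun _ => 0) := Finset.prod_pos fun i _ => Real.exp_pos _
    have hle : g (fun _ => 0) ≤ C₀ := Summable.le_tsum hgsum _ (fun k _ => hgnn k)
    linarith
  refine ⟨c * Real.exp (1/2) * C₀, by positivity, ?_⟩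
  intro N hN x hx p hp
  have hNpos : (0:ℝ) < (N:ℝ) := by exact_mod_cast hN
  have hN1 : (1:ℝ) ≤ (N:ℝ) := by exact_mod_cast hN
  set lam : ℝ := (N:ℝ)^(β/(d:ℝ)) with hlamdef
  have hlam1 : 1 ≤ lam := Real.one_le_rpow hN1 (by positivity)
  have hlam0 : 0 < lam := lt_of_lt_of_le one_pos hlam1
  set a : ℝ := (d:ℝ) * (N:ℝ)^(2*β/(d:ℝ)) with hadef
  have hlam_sq : lam^2 * (d:ℝ) = a := by
    rw [hadef, hlamdef, ← Real.rpow_natCast ((N:ℝ)^(β/(d:ℝ))) 2, ← Real.rpow_mul hNpos.le]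
    push_cast
    ring_nf
  -- pointwise bounds for each particle
  have key : ∀ i : Fin N,
      (N:ℝ)^β * c * Real.exp (-a) ≤ VN d β N (x - p i) ∧
      VN d β N (x - p i) ≤ (N:ℝ)^β * (c * Real.exp (1/2)) * C₀ := by
    intro i
    set y : EuclideanSpace ℝ (Fin d) := x - p i with hydef
    have hycoord : ∀ j, |y j| ≤ 1 := by
      intro j
      have h1 := hx j
      have h2 := hp i j
      simp only [Set.mem_Icc] at h1 h2
      have : y j = x j - p i j := rfl
      rw [this, abs_le]
      constructor <;> linarith [h1.1, h1.2, h2.1, h2.2]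
    -- upper bound for each lattice term
    have hterm : ∀ k : Fin d → ℤ,
        V0N d β N (y - intVec d k) ≤ ((N:ℝ)^β * (c * Real.exp (1/2))) * g k := by
      intro k
      set w : EuclideanSpace ℝ (Fin d) := y - intVec d k with hwdef
      have hnormw : ‖lam • w‖ = lam * ‖w‖ := by
        rw [norm_smul, Real.norm_eq_abs, abs_of_pos hlam0]
      have hsumle : ∑ j : Fin d, (|(k j : ℝ)| - 1) ≤ (d:ℝ) * ‖w‖ := by
        have hjle : ∀ j : Fin d, |(k j : ℝ)| - 1 ≤ ‖w‖ := by
          intro j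
          have hwj : w j = y j - (k j : ℝ) := by rw [hwdef]; simp [intVec]
          have h1 : |(k j : ℝ)| - |y j| ≤ |y j - (k j : ℝ)| := by
            rw [abs_sub_comm]; exact abs_sub_abs_le_abs_sub _ _
          have h2 := aux_coord_le d w j
          rw [hwj] at h2
          have := hycoord j
          linarith
        calc ∑ j : Fin d, (|(k j : ℝ)| - 1) ≤ ∑ _j : Fin d, ‖w‖ :=
              Finset.sum_le_sum fun j _ => hjle j
          _ = (d:ℝ) * ‖w‖ := by simp [mul_comm]
      have hexp : Real.exp (-‖w‖) ≤ g k := by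
        have hgk : g k = Real.exp (∑ j : Fin d, (1 - |(k j : ℝ)|) / (d:ℝ)) := by
          rw [Real.exp_sum]
        rw [hgk]
        apply Real.exp_le_exp.mpr
        rw [← Finset.sum_div]
        have hss : ∑ j : Fin d, (1 - |(k j : ℝ)|) = - ∑ j : Fin d, (|(k j : ℝ)| - 1) := by
          rw [← Finset.sum_neg_distrib]
          exact Finset.sum_congr rfl (by intros; ring)
        rw [le_div_iff₀ hdpos, hss]
        linarith
      -- chain the inequalities
      have hV0 : V0 d (lam • w) ≤ c * Real.exp (1/2) * Real.exp (-‖lam • w‖) :=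
        aux_V0_le d hd _
      have hexp2 : Real.exp (-‖lam • w‖) ≤ Real.exp (-‖w‖) := by
        apply Real.exp_le_exp.mpr
        rw [hnormw]
        nlinarith [norm_nonneg w]
      have hNβ : (0:ℝ) ≤ (N:ℝ)^β := Real.rpow_nonneg hNpos.le _
      calc V0N d β N w = (N:ℝ)^β * V0 d (lam • w) := rfl
        _ ≤ (N:ℝ)^β * (c * Real.exp (1/2) * Real.exp (-‖lam • w‖)) :=
            mul_le_mul_of_nonneg_left hV0 hNβ
        _ ≤ (N:ℝ)^β * (c * Real.exp (1/2) * g k) := by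
            apply mul_le_mul_of_nonneg_left _ hNβ
            apply mul_le_mul_of_nonneg_left _ (by positivity)
            exact le_trans hexp2 hexp
        _ = ((N:ℝ)^β * (c * Real.exp (1/2))) * g k := by ring
    -- summability of the lattice sum
    have hVnn : ∀ k : Fin d → ℤ, 0 ≤ V0N d β N (y - intVec d k) := by
      intro k
      exact mul_nonneg (Real.rpow_nonneg hNpos.le _) (aux_V0_nonneg d hd _)
    have hVsum : Summable (fun k : Fin d → ℤ => V0N d β N (y - intVec d k)) :=
      Summable.of_nonneg_of_le hVnn hterm (hgsum.mul_left _)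
    constructor
    · -- lower bound: the `k = 0` term
      have h0 : V0N d β N (y - intVec d (fun _ => 0)) ≤ VN d β N y :=
        Summable.le_tsum hVsum _ (fun k _ => hVnn k)
      have hzero : y - intVec d (fun _ => 0) = y := by
        have : intVec d (fun _ => 0) = 0 := by
          ext j; simp [intVec]
        rw [this, sub_zero]
      rw [hzero] at h0
      refine le_trans ?_ h0
      have hy_norm_sq : ‖y‖^2 ≤ (d:ℝ) := by
        have := EuclideanSpace.norm_eq y
        rw [this, Real.sq_sqrt (Finset.sum_nonneg fun j _ => sq_nonneg _)]
        calc ∑ j : Fin d, ‖y j‖^2 ≤ ∑ _j : Fin d, 1 := by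
              apply Finset.sum_le_sum
              intro j _
              rw [Real.norm_eq_abs, ← one_pow 2]
              exact pow_le_pow_left₀ (abs_nonneg _) (hycoord j) 2
          _ = (d:ℝ) := by simp
      have hy_norm : ‖y‖ ≤ Real.sqrt (d:ℝ) := by
        rw [← Real.sqrt_sq (norm_nonneg y)]
        exact Real.sqrt_le_sqrt hy_norm_sq
      have hnormy : ‖lam • y‖ = lam * ‖y‖ := by
        rw [norm_smul, Real.norm_eq_abs, abs_of_pos hlam0]
      have hsq : ‖lam • y‖^2 ≤ a := by
        rw [hnormy, mul_pow, ← hlam_sq]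
        have := mul_le_mul_of_nonneg_left hy_norm_sq (sq_nonneg lam)
        linarith
      have hlin : ‖lam • y‖ ≤ a := by
        rw [hnormy, ← hlam_sq]
        have hsd : Real.sqrt (d:ℝ) ≤ (d:ℝ) := by
          have hs1 : (1:ℝ) ≤ Real.sqrt (d:ℝ) := by
            rw [show (1:ℝ) = Real.sqrt 1 by simp]
            exact Real.sqrt_le_sqrt hdR
          nlinarith [Real.sq_sqrt hdpos.le, hs1]
        calc lam * ‖y‖ ≤ lam * Real.sqrt (d:ℝ) :=
              mul_le_mul_of_nonneg_left hy_norm hlam0.le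
          _ ≤ lam * (d:ℝ) := mul_le_mul_of_nonneg_left hsd hlam0.le
          _ ≤ lam^2 * (d:ℝ) := by nlinarith
      have hV0ge := aux_V0_ge d hd (lam • y) a hlin hsq
      calc (N:ℝ)^β * c * Real.exp (-a)
          = (N:ℝ)^β * (c * Real.exp (-a)) := by ring
        _ ≤ (N:ℝ)^β * V0 d (lam • y) :=
            mul_le_mul_of_nonneg_left hV0ge (Real.rpow_nonneg hNpos.le _)
        _ = V0N d β N y := rfl
    · -- upper bound
      calc VN d β N y = ∑' k, V0N d β N (y - intVec d k) := rfl
        _ ≤ ∑' k, ((N:ℝ)^β * (c * Real.exp (1/2))) * g k :=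
            Summable.tsum_le_tsum hterm hVsum (hgsum.mul_left _)
        _ = ((N:ℝ)^β * (c * Real.exp (1/2))) * C₀ := by rw [tsum_mul_left]
  -- sum over the particles
  have hNne : (N:ℝ) ≠ 0 := hNpos.ne'
  constructor
  · have hsum : (N:ℝ) * ((N:ℝ)^β * c * Real.exp (-a)) ≤ ∑ i, VN d β N (x - p i) := by
      calc (N:ℝ) * ((N:ℝ)^β * c * Real.exp (-a))
          = ∑ _i : Fin N, (N:ℝ)^β * c * Real.exp (-a) := by
            rw [Finset.sum_const, Finset.card_univ, Fintype.card_fin, nsmul_eq_mul]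
        _ ≤ ∑ i, VN d β N (x - p i) := Finset.sum_le_sum fun i _ => (key i).1
    have hneg : -(d:ℝ) * (N:ℝ)^(2*β/(d:ℝ)) = -a := by rw [hadef]; ring
    rw [hneg]
    calc (N:ℝ)^β * c * Real.exp (-a)
        = (1/(N:ℝ)) * ((N:ℝ) * ((N:ℝ)^β * c * Real.exp (-a))) := by
          field_simp
      _ ≤ (1/(N:ℝ)) * ∑ i, VN d β N (x - p i) :=
          mul_le_mul_of_nonneg_left hsum (by positivity)
  · have hsum : ∑ i, VN d β N (x - p i) ≤ (N:ℝ) * ((N:ℝ)^β * (c * Real.exp (1/2)) * C₀) := by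
      calc ∑ i, VN d β N (x - p i)
          ≤ ∑ _i : Fin N, (N:ℝ)^β * (c * Real.exp (1/2)) * C₀ :=
            Finset.sum_le_sum fun i _ => (key i).2
        _ = (N:ℝ) * ((N:ℝ)^β * (c * Real.exp (1/2)) * C₀) := by
            rw [Finset.sum_const, Finset.card_univ, Fintype.card_fin, nsmul_eq_mul]
    calc (1/(N:ℝ)) * ∑ i, VN d β N (x - p i)
        ≤ (1/(N:ℝ)) * ((N:ℝ) * ((N:ℝ)^β * (c * Real.exp (1/2)) * C₀)) := by
          apply mul_le_mul_of_nonneg_left hsum (by positivity)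
      _ = c * Real.exp (1/2) * C₀ * (N:ℝ)^β := by
          field_simp
end
end

section
/- There exists a constant C_d > 0 such that for every β ∈ (0,1), every integer N ≥ 1, and every x ∈ ℝ^d at which each summand y ↦ V₀^N(x − k) is differentiable (i.e. |N^{β/d}(x − k)| ≠ 1/2 for all k ∈ ℤ^d), the series of gradients converges absolutely and |∇V^N(x)| ≤ C_d · N^{β/d} · V^N(x). Consequently |∇V^N(x)| ≤ 2 e^{1/4} C_d · N^{β + β/d}. -/
open MeasureTheory Real
open scoped NNReal BigOperators

noncomputable section

/-! ### Auxiliary definitions and lemmas -/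

/-- The normalizing constant in `V₀`. -/
def cdC (d : ℕ) : ℝ := Real.Gamma ((d:ℝ)/2) / (2 * Real.pi ^ ((d:ℝ)/2))

lemma cdC_pos {d : ℕ} (hd : 1 ≤ d) : 0 < cdC d := by
  have hd' : (0:ℝ) < (d:ℝ)/2 := by
    have : (1:ℝ) ≤ (d:ℝ) := by exact_mod_cast hd
    linarith
  have h1 : 0 < Real.Gamma ((d:ℝ)/2) := Real.Gamma_pos_of_pos hd'
  have h2 : 0 < Real.pi ^ ((d:ℝ)/2) := Real.rpow_pos_of_pos Real.pi_pos _
  exact div_pos h1 (by linarith)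

lemma V0_eq (d : ℕ) (y : EuclideanSpace ℝ (Fin d)) :
    V0 d y = if ‖y‖ ≤ 1/2 then cdC d * Real.exp (-‖y‖^2)
      else cdC d * Real.exp (1/4) * Real.exp (-‖y‖) := rfl

lemma V0_pos {d : ℕ} (hd : 1 ≤ d) (y : EuclideanSpace ℝ (Fin d)) : 0 < V0 d y := by
  rw [V0_eq]
  have := cdC_pos hd
  split <;> positivity

lemma V0_le {d : ℕ} (hd : 1 ≤ d) (y : EuclideanSpace ℝ (Fin d)) :
    V0 d y ≤ cdC d * Real.exp (1/4) * Real.exp (-‖y‖) := by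
  rw [V0_eq]
  have hc := (cdC_pos hd).le
  split
  · rw [mul_assoc, ← Real.exp_add]
    apply mul_le_mul_of_nonneg_left _ hc
    apply Real.exp_le_exp.2
    nlinarith [sq_nonneg (‖y‖ - 1/2)]
  · exact le_rfl

lemma V0N_eq_le {d : ℕ} {β : ℝ} {N : ℕ} {z : EuclideanSpace ℝ (Fin d)}
    (ha : 0 < (N:ℝ)^(β/(d:ℝ))) (hz : ‖((N:ℝ)^(β/(d:ℝ))) • z‖ ≤ 1/2) :
    V0N d β N z = ((N:ℝ)^β * cdC d) *
      Real.exp ((-(((N:ℝ)^(β/(d:ℝ)))^2)) * ‖z‖^2) := by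
  set a := (N:ℝ)^(β/(d:ℝ))
  rw [V0N, V0_eq, if_pos hz, norm_smul, Real.norm_eq_abs, abs_of_pos ha]
  have : -(a * ‖z‖)^2 = (-(a^2)) * ‖z‖^2 := by ring
  rw [this]; ring

lemma V0N_eq_gt {d : ℕ} {β : ℝ} {N : ℕ} {z : EuclideanSpace ℝ (Fin d)}
    (ha : 0 < (N:ℝ)^(β/(d:ℝ))) (hz : ¬ ‖((N:ℝ)^(β/(d:ℝ))) • z‖ ≤ 1/2) :
    V0N d β N z = ((N:ℝ)^β * (cdC d * Real.exp (1/4))) *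
      Real.exp ((-((N:ℝ)^(β/(d:ℝ)))) * ‖z‖) := by
  set a := (N:ℝ)^(β/(d:ℝ))
  rw [V0N, V0_eq, if_neg hz, norm_smul, Real.norm_eq_abs, abs_of_pos ha]
  have : -(a * ‖z‖) = (-a) * ‖z‖ := by ring
  rw [this]; ring

lemma V0N_nonneg {d : ℕ} (hd : 1 ≤ d) (β : ℝ) (N : ℕ) (z : EuclideanSpace ℝ (Fin d)) :
    0 ≤ V0N d β N z := by
  rw [V0N]
  have := (V0_pos hd (((N:ℝ)^(β/(d:ℝ))) • z)).le
  positivity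

/-- Gradient of the Gaussian branch. -/
lemma hasGradientAt_branch1 {d : ℕ} (a K : ℝ) (v x : EuclideanSpace ℝ (Fin d)) :
    HasGradientAt (fun y => K * Real.exp ((-(a^2)) * ‖y - v‖^2))
      ((K * Real.exp ((-(a^2)) * ‖x - v‖^2) * (-(a^2)) * 2) • (x - v)) x := by
  have h1 : HasFDerivAt (fun y : EuclideanSpace ℝ (Fin d) => y - v)
      (ContinuousLinearMap.id ℝ _) x := (hasFDerivAt_id x).sub_const v
  have h2 := h1.norm_sq
  have h3 := (h2.const_mul (-(a^2))).exp.const_mul K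
  rw [hasGradientAt_iff_hasFDerivAt]
  refine h3.congr_fderiv ?_
  ext u
  simp [InnerProductSpace.toDual_apply_apply, real_inner_smul_left, ContinuousLinearMap.smul_apply]
  ring

/-- Gradient of the exponential branch (away from the center). -/
lemma hasGradientAt_branch2 {d : ℕ} (a K : ℝ) (v x : EuclideanSpace ℝ (Fin d))
    (hx : x - v ≠ 0) :
    HasGradientAt (fun y => K * Real.exp ((-a) * ‖y - v‖))
      ((K * Real.exp ((-a) * ‖x - v‖) * (-a) * (1 / ‖x - v‖)) • (x - v)) x := by
  have h1 : HasFDerivAt (fun y : EuclideanSpace ℝ (Fin d) => y - v)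
      (ContinuousLinearMap.id ℝ _) x := (hasFDerivAt_id x).sub_const v
  have h2 := h1.norm_sq
  have hne : ‖x - v‖ ≠ 0 := norm_ne_zero_iff.2 hx
  have hsq : ‖x - v‖^2 ≠ 0 := pow_ne_zero 2 hne
  have h2' := h2.sqrt hsq
  have hsqrt : Real.sqrt (‖x - v‖^2) = ‖x - v‖ := Real.sqrt_sq (norm_nonneg _)
  have h3 : HasFDerivAt (fun y : EuclideanSpace ℝ (Fin d) => ‖y - v‖)
      ((1 / (2 * ‖x - v‖)) • (2 • (innerSL ℝ (x - v)).comp (ContinuousLinearMap.id ℝ _))) x := by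
    have heq : (fun y : EuclideanSpace ℝ (Fin d) => Real.sqrt (‖y - v‖^2))
        = fun y => ‖y - v‖ := by
      ext y; exact Real.sqrt_sq (norm_nonneg _)
    rw [← heq, ← hsqrt]
    exact h2'
  have h4 := (h3.const_mul (-a)).exp.const_mul K
  rw [hasGradientAt_iff_hasFDerivAt]
  refine h4.congr_fderiv ?_
  ext u
  simp [InnerProductSpace.toDual_apply_apply, real_inner_smul_left, ContinuousLinearMap.smul_apply]
  field_simp

/-- The key per-summand estimate: at a point where the summand is differentiable,
its gradient is bounded by `N^{β/d}` times the summand value. -/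
lemma grad_norm_le {d : ℕ} (hd : 1 ≤ d) {β : ℝ} {N : ℕ} (hN : 1 ≤ N)
    (v x : EuclideanSpace ℝ (Fin d))
    (hne : ‖((N:ℝ)^(β/(d:ℝ))) • (x - v)‖ ≠ 1/2) :
    ‖gradient (fun y => V0N d β N (y - v)) x‖
      ≤ ((N:ℝ)^(β/(d:ℝ))) * V0N d β N (x - v) := by
  set a := (N:ℝ)^(β/(d:ℝ)) with ha_def
  have hNpos : (0:ℝ) < N := by exact_mod_cast hN
  have ha : 0 < a := Real.rpow_pos_of_pos hNpos _
  have hcont : Continuous fun y : EuclideanSpace ℝ (Fin d) => ‖a • (y - v)‖ :=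
    by fun_prop
  have hKpos : 0 < (N:ℝ)^β * cdC d :=
    mul_pos (Real.rpow_pos_of_pos hNpos _) (cdC_pos hd)
  rcases lt_or_gt_of_ne hne with h | h
  · -- Gaussian branch
    set K := (N:ℝ)^β * cdC d
    have hopen : ∀ᶠ y in nhds x, ‖a • (y - v)‖ < 1/2 :=
      (hcont.continuousAt).eventually_lt continuousAt_const h
    have heq : (fun y => V0N d β N (y - v)) =ᶠ[nhds x]
        (fun y => K * Real.exp ((-(a^2)) * ‖y - v‖^2)) :=
      hopen.mono fun y hy => V0N_eq_le ha hy.le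
    have hg := (hasGradientAt_branch1 a K v x).congr_of_eventuallyEq heq
    rw [hg.gradient]
    have hval : V0N d β N (x - v) = K * Real.exp ((-(a^2)) * ‖x - v‖^2) :=
      V0N_eq_le ha h.le
    rw [norm_smul, hval]
    set e := Real.exp ((-(a^2)) * ‖x - v‖^2) with he_def
    have hepos : 0 < e := Real.exp_pos _
    have h1 : 0 < K * e := mul_pos hKpos hepos
    have habs : |K * e * (-(a^2)) * 2| = K * e * a^2 * 2 := by
      rw [abs_of_nonpos]
      · ring
      · have h2 : 0 < K * e * a^2 * 2 := by
          have := pow_pos ha 2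
          have := mul_pos h1 (pow_pos ha 2)
          linarith [mul_pos (mul_pos h1 (pow_pos ha 2)) (by norm_num : (0:ℝ) < 2)]
        linarith
    rw [Real.norm_eq_abs, habs]
    have hw : a * ‖x - v‖ ≤ 1/2 := by
      have := h.le
      rwa [norm_smul, Real.norm_eq_abs, abs_of_pos ha] at this
    have h3 : K * e * a * (a * ‖x - v‖) ≤ K * e * a * (1/2) :=
      mul_le_mul_of_nonneg_left hw (mul_pos h1 ha).le
    calc K * e * a^2 * 2 * ‖x - v‖ = (K * e * a * (a * ‖x - v‖)) * 2 := by ring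
      _ ≤ (K * e * a * (1/2)) * 2 := by linarith
      _ = a * (K * e) := by ring
  · -- exponential branch
    set K := (N:ℝ)^β * (cdC d * Real.exp (1/4))
    have hKpos' : 0 < K :=
      mul_pos (Real.rpow_pos_of_pos hNpos _) (mul_pos (cdC_pos hd) (Real.exp_pos _))
    have hxv : x - v ≠ 0 := by
      intro h0
      rw [h0, smul_zero, norm_zero] at h
      norm_num at h
    have hopen : ∀ᶠ y in nhds x, (1:ℝ)/2 < ‖a • (y - v)‖ :=
      continuousAt_const.eventually_lt hcont.continuousAt h
    have heq : (fun y => V0N d β N (y - v)) =ᶠ[nhds x]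
        (fun y => K * Real.exp ((-a) * ‖y - v‖)) :=
      hopen.mono fun y hy => V0N_eq_gt ha (not_le.2 hy)
    have hg := (hasGradientAt_branch2 a K v x hxv).congr_of_eventuallyEq heq
    rw [hg.gradient]
    have hval : V0N d β N (x - v) = K * Real.exp ((-a) * ‖x - v‖) :=
      V0N_eq_gt ha (not_le.2 h)
    rw [norm_smul, hval]
    set e := Real.exp ((-a) * ‖x - v‖) with he_def
    have hepos : 0 < e := Real.exp_pos _
    have hnv : 0 < ‖x - v‖ := norm_pos_iff.2 hxv
    have h1 : 0 < K * e := mul_pos hKpos' hepos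
    have hinv : 0 < 1 / ‖x - v‖ := by positivity
    have habs : |K * e * (-a) * (1 / ‖x - v‖)| = K * e * a * (1 / ‖x - v‖) := by
      rw [abs_of_nonpos]
      · ring
      · have h2 : 0 < K * e * a * (1 / ‖x - v‖) := mul_pos (mul_pos h1 ha) hinv
        linarith
    rw [Real.norm_eq_abs, habs]
    have heq2 : K * e * a * (1 / ‖x - v‖) * ‖x - v‖ = a * (K * e) := by
      field_simp
    rw [heq2]

/-! ### Summability of the lattice sums -/

lemma sumZ {c : ℝ} (hc : 0 < c) : Summable (fun n : ℤ => Real.exp (-(|(n:ℝ)| / c))) := by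
  have key : ∀ n : ℤ, Real.exp (-(|(n:ℝ)| / c)) = Real.exp (-(1/c)) ^ n.natAbs := by
    intro n
    rw [← Real.exp_nat_mul]
    congr 1
    have : |(n:ℝ)| = (n.natAbs : ℝ) := by
      rw [Nat.cast_natAbs]; simp
    rw [this]; ring
  simp_rw [key]
  have hr1 : (0:ℝ) ≤ Real.exp (-(1/c)) := (Real.exp_pos _).le
  have hr : Real.exp (-(1/c)) < 1 := Real.exp_lt_one_iff.2 (by
    have : (0:ℝ) < 1/c := by positivity
    linarith)
  have hgeo : Summable (fun n : ℕ => Real.exp (-(1/c)) ^ n) :=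
    summable_geometric_of_lt_one hr1 hr
  apply Summable.of_nat_of_neg
  · simpa using hgeo
  · simpa using hgeo

lemma pi_summable_prod : ∀ (m : ℕ) (f : Fin m → ℤ → ℝ), (∀ i, Summable (f i)) →
    (∀ i n, 0 ≤ f i n) →
    Summable (fun k : Fin m → ℤ => ∏ i, f i (k i)) ∧
    (∑' k : Fin m → ℤ, ∏ i, f i (k i)) = ∏ i, ∑' n : ℤ, f i n := by
  intro m
  induction m with
  | zero =>
    intro f _ _
    constructor
    · exact Summable.of_finite
    · simp
  | succ m ih =>
    intro f hf hpos
    obtain ⟨ihs, iht⟩ := ih (fun i => f i.succ) (fun i => hf i.succ) (fun i => hpos i.succ)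
    have hprod : ∀ k : Fin (m+1) → ℤ, (∏ i, f i (k i))
        = f 0 (k 0) * ∏ i : Fin m, f i.succ (k i.succ) := fun k => Fin.prod_univ_succ _
    have hF : Summable (fun p : ℤ × (Fin m → ℤ) => f 0 p.1 * ∏ i : Fin m, f i.succ (p.2 i)) := by
      apply Summable.mul_of_nonneg (hf 0) ihs
      · intro n; exact hpos 0 n
      · intro p; exact Finset.prod_nonneg fun i _ => hpos i.succ _
    have hcomp : (fun k : Fin (m+1) → ℤ => ∏ i, f i (k i))
        = (fun p : ℤ × (Fin m → ℤ) => f 0 p.1 * ∏ i : Fin m, f i.succ (p.2 i))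
          ∘ (Fin.consEquiv fun _ => ℤ).symm := by
      funext k; rw [hprod k]; rfl
    constructor
    · rw [hcomp]; exact hF.comp_injective (Fin.consEquiv fun _ => ℤ).symm.injective
    · rw [hcomp]
      have h1 := Equiv.tsum_eq (Fin.consEquiv fun _ => ℤ).symm
        (fun p : ℤ × (Fin m → ℤ) => f 0 p.1 * ∏ i : Fin m, f i.succ (p.2 i))
      simp only [Function.comp_def]
      rw [h1, ← Summable.tsum_mul_tsum (hf 0) ihs hF, iht, Fin.prod_univ_succ]

lemma coord_abs_le_norm {d : ℕ} (y : EuclideanSpace ℝ (Fin d)) (i : Fin d) : |y i| ≤ ‖y‖ := by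
  rw [EuclideanSpace.norm_eq, ← Real.sqrt_sq_eq_abs]
  apply Real.sqrt_le_sqrt
  have := Finset.single_le_sum (f := fun j => ‖y j‖ ^ 2) (fun j _ => sq_nonneg _)
    (Finset.mem_univ i)
  simpa [Real.norm_eq_abs, sq_abs] using this

/-- Uniform bound for the lattice sums of `exp(-‖x-k‖)`. -/
lemma lattice_sum {d : ℕ} (hd : 1 ≤ d) : ∃ B : ℝ, 0 < B ∧
    ∀ x : EuclideanSpace ℝ (Fin d),
      Summable (fun k : Fin d → ℤ => Real.exp (-‖x - intVec d k‖)) ∧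
      (∑' k : Fin d → ℤ, Real.exp (-‖x - intVec d k‖)) ≤ B := by
  have hdpos : (0:ℝ) < d := by exact_mod_cast hd
  set T : ℝ := ∑' n : ℤ, Real.exp (-(|(n:ℝ)| / d)) with hT_def
  have hTsum : Summable (fun n : ℤ => Real.exp (-(|(n:ℝ)| / d))) := sumZ hdpos
  have hTpos : 0 < T := Summable.tsum_pos hTsum (fun n => (Real.exp_pos _).le) 0 (Real.exp_pos _)
  refine ⟨(Real.exp (1/(d:ℝ)) * T)^d, by positivity, fun x => ?_⟩
  -- the majorant family
  set f : Fin d → ℤ → ℝ := fun i n =>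
    Real.exp (1/(d:ℝ)) * Real.exp (-(|((⌊x i⌋ : ℝ)) - n| / d)) with hf_def
  have hfpos : ∀ i n, 0 ≤ f i n := fun i n => by positivity
  have hfsummable : ∀ i, Summable (f i) := by
    intro i
    apply Summable.mul_left
    have := hTsum.comp_injective (Equiv.subLeft (⌊x i⌋)).injective
    refine this.congr fun n => ?_
    simp only [Function.comp_apply, Equiv.subLeft_apply]
    congr 2
    push_cast
    ring
  have hftsum : ∀ i, (∑' n : ℤ, f i n) = Real.exp (1/(d:ℝ)) * T := by
    intro i
    rw [tsum_mul_left, hT_def]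
    congr 1
    have h2 : ∀ n : ℤ, Real.exp (-(|((⌊x i⌋:ℝ)) - n| / d))
        = (fun n : ℤ => Real.exp (-(|(n:ℝ)| / d))) ((Equiv.subLeft (⌊x i⌋)) n) := by
      intro n
      simp only [Equiv.subLeft_apply]
      congr 2
      push_cast
      ring
    exact (tsum_congr h2).trans ((Equiv.subLeft (⌊x i⌋)).tsum_eq (fun n : ℤ => Real.exp (-(|(n:ℝ)| / d))))
  obtain ⟨hPsum, hPtsum⟩ := pi_summable_prod d f hfsummable hfpos
  -- pointwise bound: exp(-‖x-k‖) ≤ ∏ f i (k i)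
  have hpoint : ∀ k : Fin d → ℤ, Real.exp (-‖x - intVec d k‖) ≤ ∏ i, f i (k i) := by
    intro k
    have hstep1 : Real.exp (-‖x - intVec d k‖)
        ≤ ∏ i, Real.exp (-(|x i - k i| / d)) := by
      rw [← Real.exp_sum]
      apply Real.exp_le_exp.2
      have hsum : (∑ i, |x i - (k i : ℝ)|) ≤ d * ‖x - intVec d k‖ := by
        have : ∀ i, |x i - (k i : ℝ)| ≤ ‖x - intVec d k‖ := fun i => by
          simpa [intVec] using coord_abs_le_norm (x - intVec d k) i
        calc (∑ i, |x i - (k i : ℝ)|) ≤ ∑ _i : Fin d, ‖x - intVec d k‖ :=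
              Finset.sum_le_sum fun i _ => this i
          _ = d * ‖x - intVec d k‖ := by simp [mul_comm]
      have : (∑ i, (-(|x i - (k i : ℝ)| / d))) = -((∑ i, |x i - (k i : ℝ)|) / d) := by
        rw [Finset.sum_neg_distrib, ← Finset.sum_div]
      rw [this]
      rw [neg_le_neg_iff]
      rw [div_le_iff₀ hdpos]
      linarith [hsum]
    refine hstep1.trans (Finset.prod_le_prod (fun i _ => (Real.exp_pos _).le) ?_)
    intro i _
    rw [hf_def]
    dsimp only
    rw [← Real.exp_add]
    apply Real.exp_le_exp.2
    have hfl1 : |(⌊x i⌋ : ℝ) - (k i : ℝ)| ≤ 1 + |x i - (k i : ℝ)| := by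
      have h1 : (⌊x i⌋ : ℝ) - (k i : ℝ) = ((⌊x i⌋ : ℝ) - x i) + (x i - k i) := by ring
      rw [h1]
      calc |((⌊x i⌋ : ℝ) - x i) + (x i - (k i:ℝ))|
          ≤ |(⌊x i⌋ : ℝ) - x i| + |x i - (k i:ℝ)| := abs_add_le _ _
        _ ≤ 1 + |x i - (k i:ℝ)| := by
            have h2 := Int.floor_le (x i)
            have h3 := Int.lt_floor_add_one (x i)
            have : |(⌊x i⌋ : ℝ) - x i| ≤ 1 := by
              rw [abs_le]; constructor <;> linarith
            linarith
    have h4 : |(⌊x i⌋ : ℝ) - (k i : ℝ)| / d ≤ (1 + |x i - (k i:ℝ)|) / d :=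
      (div_le_div_iff_of_pos_right hdpos).2 hfl1
    rw [add_div] at h4
    linarith
  constructor
  · exact Summable.of_nonneg_of_le (fun k => (Real.exp_pos _).le) hpoint hPsum
  · calc (∑' k : Fin d → ℤ, Real.exp (-‖x - intVec d k‖))
        ≤ ∑' k : Fin d → ℤ, ∏ i, f i (k i) :=
          (Summable.of_nonneg_of_le (fun k => (Real.exp_pos _).le) hpoint hPsum).tsum_le_tsum hpoint
            hPsum
      _ = ∏ i : Fin d, ∑' n : ℤ, f i n := hPtsum
      _ = (Real.exp (1/(d:ℝ)) * T)^d := by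
          rw [Finset.prod_congr rfl fun i _ => hftsum i]
          simp

/-- at every point where all the summands of the periodization are
differentiable, the series of gradients converges absolutely and
`|∇V^N(x)| ≤ C_d N^{β/d} V^N(x)`; consequently `|∇V^N(x)| ≤ 2 e^{1/4} C_d N^{β+β/d}`. -/
theorem stmt7 (d : ℕ) (hd : 1 ≤ d) :
    ∃ C : ℝ, 0 < C ∧ ∀ β ∈ Set.Ioo (0:ℝ) 1, ∀ N : ℕ, 1 ≤ N →
      ∀ x : EuclideanSpace ℝ (Fin d),
        (∀ k : Fin d → ℤ, ‖((N:ℝ) ^ (β/(d:ℝ))) • (x - intVec d k)‖ ≠ 1/2) →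
        Summable (fun k : Fin d → ℤ =>
          ‖gradient (fun y => V0N d β N (y - intVec d k)) x‖) ∧
        ‖∑' k : Fin d → ℤ, gradient (fun y => V0N d β N (y - intVec d k)) x‖
          ≤ C * (N:ℝ) ^ (β/(d:ℝ)) * VN d β N x ∧
        ‖∑' k : Fin d → ℤ, gradient (fun y => V0N d β N (y - intVec d k)) x‖
          ≤ 2 * Real.exp (1/4) * C * (N:ℝ) ^ (β + β/(d:ℝ)) := by
  obtain ⟨B, hB, hlat⟩ := lattice_sum (d := d) hd
  have hc := cdC_pos hd
  refine ⟨1 + cdC d * B, by positivity, ?_⟩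
  intro β hβ N hN x hx
  have hNpos : (0:ℝ) < N := by exact_mod_cast hN
  have hN1 : (1:ℝ) ≤ (N:ℝ) := by exact_mod_cast hN
  have ha : 0 < (N:ℝ)^(β/(d:ℝ)) := Real.rpow_pos_of_pos hNpos _
  have ha1 : 1 ≤ (N:ℝ)^(β/(d:ℝ)) := by
    calc (1:ℝ) = (N:ℝ)^(0:ℝ) := (Real.rpow_zero _).symm
      _ ≤ (N:ℝ)^(β/(d:ℝ)) := Real.rpow_le_rpow_of_exponent_le hN1
          (div_nonneg hβ.1.le (Nat.cast_nonneg d))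
  have hNb : (0:ℝ) < (N:ℝ)^β := Real.rpow_pos_of_pos hNpos _
  obtain ⟨hlats, hlatb⟩ := hlat x
  -- comparison bound for the summands
  have hVle : ∀ k : Fin d → ℤ, V0N d β N (x - intVec d k)
      ≤ ((N:ℝ)^β * (cdC d * Real.exp (1/4))) * Real.exp (-‖x - intVec d k‖) := by
    intro k
    rw [V0N]
    have h1 := V0_le hd (((N:ℝ)^(β/(d:ℝ))) • (x - intVec d k))
    have h2 : Real.exp (-‖((N:ℝ)^(β/(d:ℝ))) • (x - intVec d k)‖)
        ≤ Real.exp (-‖x - intVec d k‖) := by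
      apply Real.exp_le_exp.2
      rw [norm_smul, Real.norm_eq_abs, abs_of_pos ha]
      nlinarith [norm_nonneg (x - intVec d k)]
    have h3 : cdC d * Real.exp (1/4) * Real.exp (-‖((N:ℝ)^(β/(d:ℝ))) • (x - intVec d k)‖)
        ≤ cdC d * Real.exp (1/4) * Real.exp (-‖x - intVec d k‖) :=
      mul_le_mul_of_nonneg_left h2 (by positivity)
    calc (N:ℝ)^β * V0 d (((N:ℝ)^(β/(d:ℝ))) • (x - intVec d k))
        ≤ (N:ℝ)^β * (cdC d * Real.exp (1/4)
            * Real.exp (-‖((N:ℝ)^(β/(d:ℝ))) • (x - intVec d k)‖)) :=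
          mul_le_mul_of_nonneg_left h1 hNb.le
      _ ≤ (N:ℝ)^β * (cdC d * Real.exp (1/4) * Real.exp (-‖x - intVec d k‖)) :=
          mul_le_mul_of_nonneg_left h3 hNb.le
      _ = ((N:ℝ)^β * (cdC d * Real.exp (1/4))) * Real.exp (-‖x - intVec d k‖) := by ring
  have hVnonneg : ∀ k : Fin d → ℤ, 0 ≤ V0N d β N (x - intVec d k) :=
    fun k => V0N_nonneg hd β N (x - intVec d k)
  have hVsum : Summable (fun k : Fin d → ℤ => V0N d β N (x - intVec d k)) :=
    Summable.of_nonneg_of_le hVnonneg hVle (hlats.mul_left _)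
  have hgle : ∀ k : Fin d → ℤ,
      ‖gradient (fun y => V0N d β N (y - intVec d k)) x‖
        ≤ ((N:ℝ)^(β/(d:ℝ))) * V0N d β N (x - intVec d k) :=
    fun k => grad_norm_le hd hN (intVec d k) x (hx k)
  have hgsum : Summable (fun k : Fin d → ℤ =>
      ‖gradient (fun y => V0N d β N (y - intVec d k)) x‖) :=
    Summable.of_nonneg_of_le (fun k => norm_nonneg _) hgle (hVsum.mul_left _)
  have hnorm_tsum :
      ‖∑' k : Fin d → ℤ, gradient (fun y => V0N d β N (y - intVec d k)) x‖
        ≤ ∑' k : Fin d → ℤ, ‖gradient (fun y => V0N d β N (y - intVec d k)) x‖ :=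
    norm_tsum_le_tsum_norm hgsum
  have htsum_le :
      (∑' k : Fin d → ℤ, ‖gradient (fun y => V0N d β N (y - intVec d k)) x‖)
        ≤ ((N:ℝ)^(β/(d:ℝ))) * VN d β N x := by
    have h := hgsum.tsum_le_tsum hgle (hVsum.mul_left _)
    rwa [tsum_mul_left] at h
  have hmain : ‖∑' k : Fin d → ℤ, gradient (fun y => V0N d β N (y - intVec d k)) x‖
      ≤ ((N:ℝ)^(β/(d:ℝ))) * VN d β N x := hnorm_tsum.trans htsum_le
  have hVN0 : 0 ≤ VN d β N x := tsum_nonneg hVnonneg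
  refine ⟨hgsum, ?_, ?_⟩
  · -- first inequality
    have h1 : 0 ≤ ((N:ℝ)^(β/(d:ℝ))) * VN d β N x := mul_nonneg ha.le hVN0
    have h2 : 0 ≤ cdC d * B := mul_nonneg hc.le hB.le
    calc ‖∑' k : Fin d → ℤ, gradient (fun y => V0N d β N (y - intVec d k)) x‖
        ≤ ((N:ℝ)^(β/(d:ℝ))) * VN d β N x := hmain
      _ ≤ (1 + cdC d * B) * ((N:ℝ)^(β/(d:ℝ)) * VN d β N x) := by nlinarith
      _ = (1 + cdC d * B) * (N:ℝ)^(β/(d:ℝ)) * VN d β N x := by ring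
  · -- second inequality
    have hVNle : VN d β N x ≤ ((N:ℝ)^β * (cdC d * Real.exp (1/4))) * B := by
      rw [VN]
      calc (∑' k : Fin d → ℤ, V0N d β N (x - intVec d k))
          ≤ ∑' k : Fin d → ℤ,
              ((N:ℝ)^β * (cdC d * Real.exp (1/4))) * Real.exp (-‖x - intVec d k‖) :=
            hVsum.tsum_le_tsum hVle (hlats.mul_left _)
        _ = ((N:ℝ)^β * (cdC d * Real.exp (1/4)))
              * ∑' k : Fin d → ℤ, Real.exp (-‖x - intVec d k‖) := tsum_mul_left
        _ ≤ ((N:ℝ)^β * (cdC d * Real.exp (1/4))) * B :=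
            mul_le_mul_of_nonneg_left hlatb
              (mul_nonneg hNb.le (mul_nonneg hc.le (Real.exp_pos _).le))
    have hrw : (N:ℝ) ^ (β + β/(d:ℝ)) = (N:ℝ)^β * (N:ℝ)^(β/(d:ℝ)) :=
      Real.rpow_add hNpos _ _
    have hP : 0 < (N:ℝ)^β * (N:ℝ)^(β/(d:ℝ)) * Real.exp (1/4) :=
      mul_pos (mul_pos hNb ha) (Real.exp_pos _)
    have h2 : 0 ≤ cdC d * B := mul_nonneg hc.le hB.le
    calc ‖∑' k : Fin d → ℤ, gradient (fun y => V0N d β N (y - intVec d k)) x‖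
        ≤ ((N:ℝ)^(β/(d:ℝ))) * VN d β N x := hmain
      _ ≤ ((N:ℝ)^(β/(d:ℝ))) * (((N:ℝ)^β * (cdC d * Real.exp (1/4))) * B) :=
          mul_le_mul_of_nonneg_left hVNle ha.le
      _ = ((N:ℝ)^β * (N:ℝ)^(β/(d:ℝ)) * Real.exp (1/4)) * (cdC d * B) := by ring
      _ ≤ ((N:ℝ)^β * (N:ℝ)^(β/(d:ℝ)) * Real.exp (1/4)) * (2 * (1 + cdC d * B)) := by
          apply mul_le_mul_of_nonneg_left _ hP.le
          nlinarith
      _ = 2 * Real.exp (1/4) * (1 + cdC d * B) * ((N:ℝ)^β * (N:ℝ)^(β/(d:ℝ))) := by ring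
      _ = 2 * Real.exp (1/4) * (1 + cdC d * B) * (N:ℝ) ^ (β + β/(d:ℝ)) := by rw [hrw]
end
end
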